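/- Let k be a field of characteristic p > 0 and let k ⊆ K be a (possibly infinite) separable algebraic field extension. Then the degree of imperfection is preserved: [K : K^p] = [k : k^p], where L^p denotes the subfield of p-th powers. In particular, if [k : k^p] ≤ p^s then [K : K^p] ≤ p^s. -/

import Mathlib

/-!
Fix a `k`-basis `e` of `K`. As `K/k` is separable, `(e t ^ p)` is again a `k`-basis of `K`, and
the coordinates of `x ^ p` in it are the `p`-th powers of the coordinates of `x` in `e`. Hence a
`k^p`-basis `b` of `k` stays a `K^p`-basis of `K`: an element `∑ a_t e_t ^ p` lies in the
`K^p`-span of `b` because `e_t ^ p ∈ K^p`, and a relation `∑ d_j ^ p b_j = 0` gives, coordinatewise,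
the relations `∑ (e.repr d_j t) ^ p b_j = 0` over `k^p`.
-/

open Module

universe u v

section

variable {p : ℕ} {k : Type u} {K : Type v} [Field k] [Field K] [Algebra k K] [ExpChar k p]

theorem Module.Basis.repr_pow_mapPowExpCharPowOfIsSeparable [Algebra.IsSeparable k K]
    {ι : Type*} (e : Basis ι k K) (x : K) (t : ι) :
    (e.mapPowExpCharPowOfIsSeparable p 1).repr (x ^ p) t = e.repr x t ^ p := by
  have : ExpChar K p := expChar_of_injective_algebraMap (algebraMap k K).injective p
  set e' := e.mapPowExpCharPowOfIsSeparable p 1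
  have hx : x ^ p = Finsupp.linearCombination k e'
      (Finsupp.mapRange (· ^ p) (zero_pow (expChar_pos k p).ne') (e.repr x)) := by
    conv_lhs => rw [← e.linearCombination_repr x]
    rw [Finsupp.linearCombination_apply, Finsupp.linearCombination_apply,
      Finsupp.sum_mapRange_index (by simp)]
    simp only [Finsupp.sum, sum_pow_char, smul_pow, e', Basis.mapPowExpCharPowOfIsSeparable,
      Basis.mk_apply, pow_one]
  rw [hx, e'.repr_linearCombination, Finsupp.mapRange_apply]

variable [ExpChar K p]

theorem algebraMap_mem_frobenius_fieldRange {a : k} (ha : a ∈ (frobenius k p).fieldRange) :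
    algebraMap k K a ∈ (frobenius K p).fieldRange := by
  obtain ⟨b, rfl⟩ := ha
  exact ⟨algebraMap k K b, by simp [frobenius_def]⟩

theorem algebraMap_mem_span_frobenius_fieldRange {ι : Type*} {v : ι → k} {a : k}
    (ha : a ∈ Submodule.span (frobenius k p).fieldRange (Set.range v)) :
    algebraMap k K a ∈
      Submodule.span (frobenius K p).fieldRange (Set.range (algebraMap k K ∘ v)) := by
  induction ha using Submodule.span_induction with
  | mem _ h =>
    obtain ⟨i, rfl⟩ := h
    exact Submodule.subset_span ⟨i, rfl⟩
  | zero => simp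
  | add _ _ _ _ hx hy => simpa using add_mem hx hy
  | smul c x _ hx =>
    have : algebraMap k K (c • x) =
        (⟨_, algebraMap_mem_frobenius_fieldRange c.2⟩ : (frobenius K p).fieldRange) •
          algebraMap k K x := by
      rw [Algebra.smul_def, map_mul]
      rfl
    rw [this]
    exact Submodule.smul_mem _ _ hx

variable [Algebra.IsSeparable k K]

theorem span_algebraMap_frobenius_fieldRange_eq_top {ι : Type*} {v : ι → k}
    (hv : Submodule.span (frobenius k p).fieldRange (Set.range v) = ⊤) :
    Submodule.span (frobenius K p).fieldRange (Set.range (algebraMap k K ∘ v)) = ⊤ := by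
  let e := Basis.ofVectorSpace k K
  let e' := e.mapPowExpCharPowOfIsSeparable p 1
  refine eq_top_iff.2 fun x _ ↦ ?_
  rw [← e'.linearCombination_repr x, Finsupp.linearCombination_apply]
  refine Submodule.finsuppSum_mem _ _ _ _ fun t _ ↦ ?_
  have he' : e' t ∈ (frobenius K p).fieldRange :=
    ⟨e t, by simp [e', Basis.mapPowExpCharPowOfIsSeparable, frobenius_def]⟩
  rw [Algebra.smul_def, mul_comm]
  exact Submodule.smul_mem _ (⟨e' t, he'⟩ : (frobenius K p).fieldRange)
    (algebraMap_mem_span_frobenius_fieldRange (hv ▸ Submodule.mem_top))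

theorem linearIndependent_algebraMap_frobenius_fieldRange {ι : Type*} {v : ι → k}
    (hv : LinearIndependent (frobenius k p).fieldRange v) :
    LinearIndependent (frobenius K p).fieldRange (algebraMap k K ∘ v) := by
  let e := Basis.ofVectorSpace k K
  refine linearIndependent_iff'.2 fun s g hg i hi ↦ ?_
  choose d hd using fun j ↦ (g j).2
  have hsum : ∑ j ∈ s, v j • d j ^ p = 0 := by
    rw [← hg]
    refine Finset.sum_congr rfl fun j _ ↦ ?_
    rw [Algebra.smul_def, mul_comm, ← frobenius_def, hd j]
    rfl
  have hcoord (t) : ∑ j ∈ s, (e.repr (d j) t) ^ p * v j = 0 := by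
    simpa [e.repr_pow_mapPowExpCharPowOfIsSeparable, mul_comm]
      using congr((e.mapPowExpCharPowOfIsSeparable p 1).repr $hsum t)
  have hdi : d i = 0 := e.ext_elem_iff.2 fun t ↦ by
    have := linearIndependent_iff'.1 hv s
      (fun j ↦ ⟨_, e.repr (d j) t, frobenius_def ..⟩) (hcoord t) i hi
    simpa [(expChar_pos k p).ne'] using congr($this.1)
  ext
  rw [← hd i, hdi, map_zero]
  rfl

noncomputable def Module.Basis.frobeniusFieldRangeOfIsSeparable {ι : Type*}
    (b : Basis ι (frobenius k p).fieldRange k) : Basis ι (frobenius K p).fieldRange K :=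
  .mk (linearIndependent_algebraMap_frobenius_fieldRange b.linearIndependent)
    (span_algebraMap_frobenius_fieldRange_eq_top b.span_eq).ge

variable (p k K) in
theorem lift_rank_frobenius_fieldRange_eq_of_isSeparable :
    Cardinal.lift.{u} (Module.rank (frobenius K p).fieldRange K) =
      Cardinal.lift.{v} (Module.rank (frobenius k p).fieldRange k) := by
  let b := Basis.ofVectorSpace (frobenius k p).fieldRange k
  rw [← b.mk_eq_rank'', ← (b.frobeniusFieldRangeOfIsSeparable (K := K)).mk_eq_rank]

end

theorem stmt5_general
    (p : ℕ) [Fact p.Prime]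
    (k K : Type) [Field k] [Field K] [Algebra k K]
    [CharP k p] [CharP K p]
    [Algebra.IsSeparable k K] :
    Module.rank (↥((frobenius K p).fieldRange)) K
      = Module.rank (↥((frobenius k p).fieldRange)) k ∧
    ∀ s : ℕ, Module.rank (↥((frobenius k p).fieldRange)) k ≤ (p : Cardinal) ^ s →
      Module.rank (↥((frobenius K p).fieldRange)) K ≤ (p : Cardinal) ^ s := by
  have h := lift_rank_frobenius_fieldRange_eq_of_isSeparable p k K
  rw [Cardinal.lift_id, Cardinal.lift_id] at h
  exact ⟨h, fun s hs ↦ h ▸ hs⟩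

/-- Separable algebraic extensions preserve the degree of imperfection: if `k ⊆ K`
is a separable algebraic extension of fields of characteristic `p > 0`, then
`[K : K^p] = [k : k^p]`, where `L^p` is the subfield of `p`-th powers (the range of
the Frobenius). In particular, if `[k : k^p] ≤ p^s` then `[K : K^p] ≤ p^s`. -/
theorem stmt5
    (p : ℕ) [Fact p.Prime]
    (k K : Type) [Field k] [Field K] [Algebra k K]
    [CharP k p] [CharP K p]
    [Algebra.IsSeparable k K] [Algebra.IsAlgebraic k K] :
    Module.rank (↥((frobenius K p).fieldRange)) K
      = Module.rank (↥((frobenius k p).fieldRange)) k ∧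
    ∀ s : ℕ, Module.rank (↥((frobenius k p).fieldRange)) k ≤ (p : Cardinal) ^ s →
      Module.rank (↥((frobenius K p).fieldRange)) K ≤ (p : Cardinal) ^ s :=
  stmt5_general p k K
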